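/- Let T be a theory, p a partial type, and φ(x,y) a formula such that there exist indiscernible sequences ⟨aᵢ⟩ᵢ∈ℚ in p and ⟨bᵢ⟩ᵢ∈ℚ with φ(aᵢ,bⱼ) ⟺ i < j. Then for every n ∈ ℕ the binary-tree scheme Γ_p(φ,n) = { p(x_η) : η ∈ 2ⁿ } ∪ { φ(x_η, y_{η↾k})^{η(k)} : η ∈ 2ⁿ, k < n } is consistent. -/

import Mathlib

open FirstOrder Cardinal

namespace Paper

variable (L : FirstOrder.Language) {M : Type*} [L.Structure M]

/-- Two `n`-tuples have the same type over the parameter set `A`. -/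
def SameTypeT (A : Set M) {n : ℕ} (c c' : Fin n → M) : Prop :=
  ∀ s : Set (Fin n → M), A.Definable L s → (c ∈ s ↔ c' ∈ s)

/-- Two elements have the same type over the parameter set `A`. -/
def SameType (A : Set M) (a a' : M) : Prop :=
  SameTypeT L A (fun _ : Fin 1 => a) (fun _ : Fin 1 => a')

/-- An `A`-indiscernible sequence of `m`-tuples indexed by a linear order `I`. -/
def IndiscT {I : Type*} [LinearOrder I] (A : Set M) {m : ℕ} (c : I → Fin m → M) : Prop :=
  ∀ (n : ℕ) (s : Set (Fin n × Fin m → M)), A.Definable L s →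
    ∀ i j : Fin n → I, StrictMono i → StrictMono j →
      ((fun q => c (i q.1) q.2) ∈ s ↔ (fun q => c (j q.1) q.2) ∈ s)

/-- An `A`-indiscernible sequence of elements. -/
def Indisc {I : Type*} [LinearOrder I] (A : Set M) (c : I → M) : Prop :=
  IndiscT L A (fun i (_ : Fin 1) => c i)

/-- An `A`-indiscernible sequence of pairs. -/
def IndiscPair {I : Type*} [LinearOrder I] (A : Set M) (c d : I → M) : Prop :=
  IndiscT L A (fun i => ![c i, d i])

/-- The (model-theoretic) algebraic closure of `A`. -/
def aclS (A : Set M) : Set M :=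
  {b | ∃ s : Set M, A.Definable₁ L s ∧ b ∈ s ∧ s.Finite}

/-- `a` realizes the partial type `p`, given as a family of sets. -/
def Realizes (p : Set (Set M)) (a : M) : Prop := ∀ s ∈ p, a ∈ s

/-- `p` is a (consistent) partial type over `A`. -/
def IsPartialTypeOver (A : Set M) (p : Set (Set M)) : Prop :=
  (∀ s ∈ p, A.Definable₁ L s) ∧ ∃ a : M, Realizes p a

/-- The ambient structure is a monster model: small finitely-satisfiable families of
definable sets are realized. -/
def IsMonster : Prop :=
  ∀ F : Set (Set M), (∀ s ∈ F, Set.univ.Definable₁ L s) → Cardinal.mk F < Cardinal.mk M →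
    (∀ G : Finset (Set M), ↑G ⊆ F → (⋂₀ (G : Set (Set M))).Nonempty) → (⋂₀ F).Nonempty

/-- Stability (Lascar–Poizat) of the complete type of `a` over `A`: no definable relation
has the order property witnessed by an indiscernible sequence of realizations of the type. -/
def StableType (A : Set M) (a : M) : Prop :=
  ¬ ∃ φ : Set (M × M), Set.univ.Definable₂ L φ ∧ ∃ c d : ℚ → M,
      IndiscPair L A c d ∧ (∀ i, SameType L A a (c i)) ∧
      ∀ i j, ((c i, d j) ∈ φ ↔ i < j)

/-- A family of sets is `k`-inconsistent. -/
def kInconsistent {α β : Type*} (k : ℕ) (F : α → Set β) : Prop :=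
  ∀ S : Finset α, S.card = k → ¬ ∃ x : β, ∀ i ∈ S, x ∈ F i

/-- The instance `φ(x, c)` (with `x` an `n`-tuple of variables and `c` a `k`-tuple of
parameters) divides over `A`. -/
def DividesT (A : Set M) {n k : ℕ} (φ : Set (Fin (n + k) → M)) (c : Fin k → M) : Prop :=
  ∃ cs : ℕ → Fin k → M, cs 0 = c ∧ IndiscT L A cs ∧
    ∃ m : ℕ, 0 < m ∧ kInconsistent m (fun i => {x : Fin n → M | Fin.append x (cs i) ∈ φ})

/-- The instance `φ(x, c)` strongly divides over `A`. -/
def StronglyDividesT (A : Set M) {n k : ℕ} (φ : Set (Fin (n + k) → M)) (c : Fin k → M) : Prop :=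
  {c' | SameTypeT L A c c'}.Infinite ∧
    ∃ m : ℕ, 0 < m ∧ kInconsistent m
      (fun c' : {c' // SameTypeT L A c c'} => {x : Fin n → M | Fin.append x c'.1 ∈ φ})

/-- The instance `φ(x, c)` þ-divides over `A`: it strongly divides over `A ∪ e` for some
finite tuple `e`. -/
def ThDividesT (A : Set M) {n k : ℕ} (φ : Set (Fin (n + k) → M)) (c : Fin k → M) : Prop :=
  ∃ (j : ℕ) (e : Fin j → M), StronglyDividesT L (A ∪ Set.range e) φ c

/-- The type of the tuple `a` over `B` forks over `A`: it implies a finite disjunction of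
instances dividing over `A`. -/
def TypeForksT (A B : Set M) {n : ℕ} (a : Fin n → M) : Prop :=
  ∃ (N : ℕ) (k : Fin N → ℕ) (φ : ∀ i : Fin N, Set (Fin (n + k i) → M))
    (c : ∀ i : Fin N, Fin (k i) → M),
    (∀ i, Set.univ.Definable L (φ i)) ∧ (∀ i, DividesT L A (φ i) (c i)) ∧
    ∀ x : Fin n → M, SameTypeT L B a x → ∃ i, Fin.append x (c i) ∈ φ i

/-- The type of the tuple `a` over `B` þ-forks over `A`. -/
def TypeThForksT (A B : Set M) {n : ℕ} (a : Fin n → M) : Prop :=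
  ∃ (N : ℕ) (k : Fin N → ℕ) (φ : ∀ i : Fin N, Set (Fin (n + k i) → M))
    (c : ∀ i : Fin N, Fin (k i) → M),
    (∀ i, Set.univ.Definable L (φ i)) ∧ (∀ i, ThDividesT L A (φ i) (c i)) ∧
    ∀ x : Fin n → M, SameTypeT L B a x → ∃ i, Fin.append x (c i) ∈ φ i

/-- The type of the element `a` over `B` forks over `A`. -/
def TypeForks (A B : Set M) (a : M) : Prop := TypeForksT L A B (fun _ : Fin 1 => a)

/-- The type of the element `a` over `B` þ-forks over `A`. -/
def TypeThForks (A B : Set M) (a : M) : Prop := TypeThForksT L A B (fun _ : Fin 1 => a)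

/-- þ-independence of tuples: `b ⫝þ_A c`. -/
def ThIndT (A : Set M) {n m : ℕ} (b : Fin n → M) (c : Fin m → M) : Prop :=
  ¬ TypeThForksT L A (A ∪ Set.range c) b

/-- þ-independence of an element from a tuple over `A`. -/
def ThInd (A : Set M) (a : M) {m : ℕ} (c : Fin m → M) : Prop :=
  ThIndT L A (fun _ : Fin 1 => a) c

/-- The ambient structure is rosy: þ-independence is symmetric. -/
def IsRosy : Prop :=
  ∀ (A : Set M) (n m : ℕ) (b : Fin n → M) (c : Fin m → M), ThIndT L A b c ↔ ThIndT L A c b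

/-- The ambient structure is dependent (NIP): no definable relation has the
independence property. -/
def IsNIP : Prop :=
  ∀ (m k : ℕ) (s : Set ((Fin m ⊕ Fin k) → M)), Set.univ.Definable L s →
    ¬ ∃ (a : ℕ → Fin m → M) (b : Set ℕ → Fin k → M),
        ∀ (i : ℕ) (t : Set ℕ), (Sum.elim (a i) (b t) ∈ s ↔ i ∈ t)

/-- `UthGe L A a α` : the þ-rank (foundation rank for þ-forking) of `tp(a/A)` is `≥ α`. -/
def UthGe (A : Set M) (a : M) (α : Ordinal.{0}) : Prop :=
  ∀ β < α, ∃ (B : Set M) (a' : M), A ⊆ B ∧ SameType L A a a' ∧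
    TypeThForks L A B a' ∧ UthGe B a' β
termination_by α

/-- `UGe L A a α` : the U-rank (foundation rank for forking) of `tp(a/A)` is `≥ α`. -/
def UGe (A : Set M) (a : M) (α : Ordinal.{0}) : Prop :=
  ∀ β < α, ∃ (B : Set M) (a' : M), A ⊆ B ∧ SameType L A a a' ∧
    TypeForks L A B a' ∧ UGe B a' β
termination_by α

/-- The U-þ-rank of `tp(a/A)` equals `α`. -/
def UthRankIs (A : Set M) (a : M) (α : Ordinal.{0}) : Prop :=
  UthGe L A a α ∧ ¬ UthGe L A a (α + 1)

/-- The U-rank of `tp(a/A)` equals `α`. -/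
def URankIs (A : Set M) (a : M) (α : Ordinal.{0}) : Prop :=
  UGe L A a α ∧ ¬ UGe L A a (α + 1)

/-- The complete type `tp(a/B)` is definable over `A`. -/
def TypeDefinableOver (A B : Set M) (a : M) : Prop :=
  ∀ (k : ℕ) (φ : Set (Fin (1 + k) → M)), (∅ : Set M).Definable L φ →
    ∃ d : Set (Fin k → M), A.Definable L d ∧
      ∀ c : Fin k → M, (∀ i, c i ∈ B) →
        (Fin.append (fun _ : Fin 1 => a) c ∈ φ ↔ c ∈ d)

/-- The complete type `tp(x₀ / C ∪ {param})`, viewed as a partial type in the parameter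
`param`, strongly divides over `C`. -/
def CTypeStronglyDivides (C : Set M) (param x₀ : M) : Prop :=
  param ∉ aclS L C ∧ ∃ m : ℕ, 0 < m ∧ kInconsistent m
    (fun p' : {p' : M // SameType L C param p'} =>
      {x : M | SameTypeT L C ![x₀, param] ![x, p'.1]})

/-- Some formula of `tp(a/B)` þ-divides over `A`. -/
def TypeThDivides (A B : Set M) (a : M) : Prop :=
  ∃ (k : ℕ) (φ : Set (Fin (1 + k) → M)) (c : Fin k → M),
    Set.univ.Definable L φ ∧ (∀ i, c i ∈ B) ∧
    Fin.append (fun _ : Fin 1 => a) c ∈ φ ∧ ThDividesT L A φ c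

/-- There is a definable transitive relation with an infinite chain of realizations
of `tp(a/A)` (failure of hereditary stability). -/
def HasOrderChainIn (A : Set M) (a : M) : Prop :=
  ∃ R : Set (M × M), Set.univ.Definable₂ L R ∧
    (∀ x y z : M, (x, y) ∈ R → (y, z) ∈ R → (x, z) ∈ R) ∧
    ∃ c : ℕ → M, (∀ i, SameType L A a (c i)) ∧ ∀ i j : ℕ, ((c i, c j) ∈ R ↔ i ≤ j)

/-! The order property along `ℚ` already contains every finite binary tree: send a branch `η`
to the dyadic rational `treePoint η n` and the node at depth `k` to the midpoint
`treePoint η k + 2⁻⁽ᵏ⁺¹⁾` of the interval `[treePoint η k, treePoint η k + 2⁻ᵏ)` that contains all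
branches through it. Branches turning left (`η k = true`) stay below the midpoint, those turning
right lie above it, so `φ(a_{treePoint η n}, b_{midpoint}) ↔ η k`. -/

def treePoint (η : ℕ → Bool) : ℕ → ℚ
  | 0 => 0
  | k + 1 => treePoint η k + if η k then 0 else (1 / 2) ^ (k + 1)

lemma treePoint_congr {η η' : ℕ → Bool} {k : ℕ} (h : ∀ i < k, η i = η' i) :
    treePoint η k = treePoint η' k := by
  induction k with
  | zero => rfl
  | succ k ih =>
    simp only [treePoint, ih fun i hi => h i (by omega), h k k.lt_succ_self]

lemma treePoint_succ_sub_le (η : ℕ → Bool) (k : ℕ) :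
    0 ≤ treePoint η (k + 1) - treePoint η k ∧
      treePoint η (k + 1) - treePoint η k ≤ (1 / 2) ^ (k + 1) := by
  cases h : η k <;> simp [treePoint, h]

lemma treePoint_mem_Icc {η : ℕ → Bool} {k n : ℕ} (hkn : k ≤ n) :
    treePoint η n ∈ Set.Icc (treePoint η k) (treePoint η k + (1 / 2) ^ k - (1 / 2) ^ n) := by
  induction n, hkn using Nat.le_induction with
  | base => simp
  | succ n _ ih =>
    obtain ⟨h₀, h₁⟩ := treePoint_succ_sub_le η n
    constructor <;> linarith [ih.1, ih.2, pow_succ (1 / 2 : ℚ) n]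

lemma treePoint_lt_iff {η : ℕ → Bool} {k n : ℕ} (hkn : k < n) :
    treePoint η n < treePoint η k + (1 / 2) ^ (k + 1) ↔ η k = true := by
  obtain ⟨h₀, h₁⟩ := treePoint_mem_Icc (η := η) (show k + 1 ≤ n from hkn)
  have hpos : (0 : ℚ) < (1 / 2) ^ n := by positivity
  cases h : η k
  · simp only [treePoint, h, Bool.false_eq_true, if_false, iff_false, not_lt] at h₀ ⊢
    exact h₀
  · simp only [treePoint, h, if_true, add_zero, iff_true] at h₁ ⊢
    linarith

theorem statement_2_general
    (p : Set (Set M))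
    (φ : Set (M × M))
    (a b : ℚ → M)
    (ha : ∀ i, Realizes p (a i))
    (hop : ∀ i j : ℚ, ((a i, b j) ∈ φ ↔ i < j)) :
    ∀ n : ℕ, ∃ (x : (ℕ → Bool) → M) (y : (ℕ → Bool) → ℕ → M),
      (∀ η η' : ℕ → Bool, ∀ k : ℕ, (∀ i < k, η i = η' i) → y η k = y η' k) ∧
      ∀ η : ℕ → Bool, Realizes p (x η) ∧
        ∀ k < n, ((x η, y η k) ∈ φ ↔ η k = true) := fun n =>
  ⟨fun η => a (treePoint η n), fun η k => b (treePoint η k + (1 / 2) ^ (k + 1)),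
    fun _ _ _ h => congrArg (fun t => b (t + _)) (treePoint_congr h),
    fun η => ⟨ha _, fun _ hk => (hop _ _).trans (treePoint_lt_iff hk)⟩⟩

/-- the order property witnessed by indiscernible sequences in `p`
implies consistency of the binary-tree schemes `Γ_p(φ, n)` for every `n`. -/
theorem statement_2
    (hM : IsMonster L (M := M))
    (A : Set M) (p : Set (Set M)) (hp : IsPartialTypeOver L A p)
    (φ : Set (M × M)) (hφ : Set.univ.Definable₂ L φ)
    (a b : ℚ → M) (hind : IndiscPair L A a b)
    (ha : ∀ i, Realizes p (a i))
    (hop : ∀ i j : ℚ, ((a i, b j) ∈ φ ↔ i < j)) :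
    ∀ n : ℕ, ∃ (x : (ℕ → Bool) → M) (y : (ℕ → Bool) → ℕ → M),
      (∀ η η' : ℕ → Bool, ∀ k : ℕ, (∀ i < k, η i = η' i) → y η k = y η' k) ∧
      ∀ η : ℕ → Bool, Realizes p (x η) ∧
        ∀ k < n, ((x η, y η k) ∈ φ ↔ η k = true) :=
  statement_2_general p φ a b ha hop

end Paper
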